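/- Let τ = Σ_{i,j} τ_{ij} (E_{ij} ⊗ E_{ij}) be a maximally correlated state on ℂ^n ⊗ ℂ^n and let σ = Σ_i τ_{ii} (E_{ii} ⊗ E_{ii}) be its diagonal part in the computational product basis. Then the negativity of τ satisfies N(τ) = (1/2)‖τ − σ‖_{l1}, where the entrywise l1-norm is taken in the computational product basis. -/

import Mathlib

/-!
The partial transpose of `τ` maps the basis vector `e_(j,i)` to `τ_ij e_(i,j)`: it is the
permutation matrix of the swap `(i,j) ↦ (j,i)` with weights, so `(τ^Γ)† τ^Γ` is diagonal with
entries `|τ_ij|²` and `‖τ^Γ‖₁ = Σ_ij |τ_ij|`. The only nonzero entries of `τ − σ` are the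
off-diagonal `τ_ij` (`i ≠ j`), and positivity with trace one gives `Σ_i |τ_ii| = Σ_i τ_ii = 1`,
so `‖τ − σ‖_l1 = Σ_ij |τ_ij| − 1 = 2 N(τ)`.
-/

open scoped Kronecker ComplexOrder
open Matrix

noncomputable def traceNorm {ι : Type*} [Fintype ι] [DecidableEq ι] (A : Matrix ι ι ℂ) : ℝ :=
  (((Matrix.posSemidef_conjTranspose_mul_self A).1.eigenvectorUnitary.1 *
      Matrix.diagonal ((fun x : ℝ => (x : ℂ)) ∘ Real.sqrt ∘ (Matrix.posSemidef_conjTranspose_mul_self A).1.eigenvalues) *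
      (star (Matrix.posSemidef_conjTranspose_mul_self A).1.eigenvectorUnitary :
        Matrix ι ι ℂ)).trace).re

noncomputable def l1Norm {ι κ : Type*} [Fintype ι] [Fintype κ] (A : Matrix ι κ ℂ) : ℝ :=
  ∑ i, ∑ j, ‖A i j‖

def ptranspose {α β : Type*} (ρ : Matrix (α × β) (α × β) ℂ) : Matrix (α × β) (α × β) ℂ :=
  Matrix.of fun p q => ρ (p.1, q.2) (q.1, p.2)

noncomputable def negativity {α β : Type*} [Fintype α] [Fintype β] [DecidableEq α] [DecidableEq β]
    (ρ : Matrix (α × β) (α × β) ℂ) : ℝ :=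
  (traceNorm (ptranspose ρ) - 1) / 2

def matUnit {ι : Type*} [DecidableEq ι] (i j : ι) : Matrix ι ι ℂ :=
  Matrix.single i j 1

noncomputable def mcs {n : ℕ} (t : Fin n → Fin n → ℂ) :
    Matrix (Fin n × Fin n) (Fin n × Fin n) ℂ :=
  ∑ i, ∑ j, t i j • (matUnit i j ⊗ₖ matUnit i j)

def blockOf {m n : ℕ} (ρ : Matrix (Fin m × Fin n) (Fin m × Fin n) ℂ) (i j : Fin m) :
    Matrix (Fin n) (Fin n) ℂ :=
  Matrix.of fun k l => ρ (i, k) (j, l)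

noncomputable def conjU {m n : ℕ} (U : Matrix.unitaryGroup (Fin m) ℂ)
    (ρ : Matrix (Fin m × Fin n) (Fin m × Fin n) ℂ) : Matrix (Fin m × Fin n) (Fin m × Fin n) ℂ :=
  ((U : Matrix (Fin m) (Fin m) ℂ) ⊗ₖ (1 : Matrix (Fin n) (Fin n) ℂ))ᴴ * ρ *
    ((U : Matrix (Fin m) (Fin m) ℂ) ⊗ₖ (1 : Matrix (Fin n) (Fin n) ℂ))

noncomputable def conjUV {m n : ℕ} (U : Matrix.unitaryGroup (Fin m) ℂ)
    (V : Matrix.unitaryGroup (Fin n) ℂ)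
    (ρ : Matrix (Fin m × Fin n) (Fin m × Fin n) ℂ) : Matrix (Fin m × Fin n) (Fin m × Fin n) ℂ :=
  ((U : Matrix (Fin m) (Fin m) ℂ) ⊗ₖ (V : Matrix (Fin n) (Fin n) ℂ))ᴴ * ρ *
    ((U : Matrix (Fin m) (Fin m) ℂ) ⊗ₖ (V : Matrix (Fin n) (Fin n) ℂ))

noncomputable def QNA {m n : ℕ} (ρ : Matrix (Fin m × Fin n) (Fin m × Fin n) ℂ) : ℝ :=
  ⨅ U : Matrix.unitaryGroup (Fin m) ℂ,
    ((∑ i, ∑ j, traceNorm (blockOf (conjU U ρ) i j)) - 1) / 2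

noncomputable def QNAB {m n : ℕ} (ρ : Matrix (Fin m × Fin n) (Fin m × Fin n) ℂ) : ℝ :=
  ⨅ U : Matrix.unitaryGroup (Fin m) ℂ, ⨅ V : Matrix.unitaryGroup (Fin n) ℂ,
    (l1Norm (conjUV U V ρ) - 1) / 2

/-- The diagonal part `σ = Σ_i τ_{ii} (E_{ii} ⊗ E_{ii})` of a maximally correlated state. -/
noncomputable def mcsDiag {n : ℕ} (t : Fin n → Fin n → ℂ) :
    Matrix (Fin n × Fin n) (Fin n × Fin n) ℂ :=
  ∑ i, t i i • (matUnit i i ⊗ₖ matUnit i i)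

open Function

section TraceNorm

open scoped MatrixOrder

variable {ι : Type*} [Fintype ι] [DecidableEq ι]

theorem traceNorm_eq_re_trace_sqrt (A : Matrix ι ι ℂ) :
    traceNorm A = (CFC.sqrt (Aᴴ * A)).trace.re := by
  have hA := (posSemidef_conjTranspose_mul_self A).1
  rw [CFC.sqrt_eq_real_sqrt _ (nonneg_iff_posSemidef.mpr (posSemidef_conjTranspose_mul_self A)),
    cfcₙ_eq_cfc, hA.cfc_eq, IsHermitian.cfc, Unitary.conjStarAlgAut_apply]
  rfl

theorem traceNorm_eq_of_conjTranspose_mul_self_eq {A B : Matrix ι ι ℂ} (hB : B.PosSemidef)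
    (h : Aᴴ * A = B * B) : traceNorm A = B.trace.re := by
  rw [traceNorm_eq_re_trace_sqrt, CFC.sqrt_unique h.symm (nonneg_iff_posSemidef.mpr hB)]

theorem traceNorm_of_ite_eq {σ : ι → ι} (hσ : Injective σ) (f : ι → ℂ) :
    traceNorm (of fun i j => if i = σ j then f j else 0) = ∑ j, ‖f j‖ := by
  have hB : (diagonal fun j => (‖f j‖ : ℂ)).PosSemidef :=
    posSemidef_diagonal_iff.mpr fun j => Complex.zero_le_real.mpr (norm_nonneg _)
  rw [traceNorm_eq_of_conjTranspose_mul_self_eq hB, trace_diagonal, Complex.re_sum]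
  · simp only [Complex.ofReal_re]
  ext j k
  rw [diagonal_mul_diagonal, mul_apply, Finset.sum_eq_single (σ j)]
  · by_cases hjk : j = k
    · subst hjk
      simp [Complex.conj_mul', sq]
    · simp [hjk, hσ.ne hjk]
  · intro i _ hi
    simp [hi]
  · simp

end TraceNorm

section MaximallyCorrelated

variable {n : ℕ}

theorem mcs_apply (t : Fin n → Fin n → ℂ) (a b c d : Fin n) :
    mcs t (a, b) (c, d) = if a = b ∧ c = d then t a c else 0 := by
  simp only [mcs, matUnit, Matrix.sum_apply, Matrix.smul_apply, kroneckerMap_apply, single_apply,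
    smul_eq_mul]
  rw [Finset.sum_eq_single a (fun i _ hi => by simp [hi]) (by simp),
    Finset.sum_eq_single c (fun j _ hj => by simp [hj]) (by simp)]
  grind

theorem mcs_sub (t s : Fin n → Fin n → ℂ) : mcs t - mcs s = mcs (t - s) := by
  simp only [mcs, ← Finset.sum_sub_distrib, ← sub_smul, Pi.sub_apply]

theorem mcsDiag_eq_mcs (t : Fin n → Fin n → ℂ) :
    mcsDiag t = mcs fun i j => if i = j then t i i else 0 := by
  simp only [mcs, mcsDiag, ite_smul, zero_smul, Finset.sum_ite_eq, Finset.mem_univ, if_true]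

theorem ptranspose_mcs (t : Fin n → Fin n → ℂ) :
    ptranspose (mcs t) = of fun p q => if p = q.swap then t q.2 q.1 else 0 := by
  ext ⟨a, b⟩ ⟨c, d⟩
  simp only [ptranspose, of_apply, mcs_apply, Prod.swap_prod_mk, Prod.mk.injEq]
  aesop

theorem traceNorm_ptranspose_mcs (t : Fin n → Fin n → ℂ) :
    traceNorm (ptranspose (mcs t)) = ∑ a, ∑ b, ‖t a b‖ := by
  rw [ptranspose_mcs, traceNorm_of_ite_eq Prod.swap_injective, Fintype.sum_prod_type,
    Finset.sum_comm]

theorem l1Norm_mcs (t : Fin n → Fin n → ℂ) : l1Norm (mcs t) = ∑ a, ∑ b, ‖t a b‖ := by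
  simp [l1Norm, Fintype.sum_prod_type, mcs_apply, ite_and, apply_ite (‖·‖)]

theorem l1Norm_mcs_sub_mcsDiag (t : Fin n → Fin n → ℂ) :
    l1Norm (mcs t - mcsDiag t) = ∑ a, ∑ b, ‖t a b‖ - ∑ a, ‖t a a‖ := by
  have hnorm (a b : Fin n) :
      ‖t a b - if a = b then t a a else 0‖ = ‖t a b‖ - if a = b then ‖t a a‖ else 0 := by
    split_ifs with hab
    · simp [hab]
    · simp
  simp only [mcsDiag_eq_mcs, mcs_sub, l1Norm_mcs, Pi.sub_apply, hnorm, Finset.sum_sub_distrib,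
    Finset.sum_ite_eq, Finset.mem_univ, if_true]

theorem sum_norm_diag_eq_one_of_posSemidef {t : Fin n → Fin n → ℂ} (hpos : (mcs t).PosSemidef)
    (htr : (mcs t).trace = 1) : ∑ a, ‖t a a‖ = 1 := by
  have hdiag (a : Fin n) : (‖t a a‖ : ℂ) = t a a := by
    have := hpos.diag_nonneg (i := (a, a))
    rw [mcs_apply, if_pos ⟨rfl, rfl⟩] at this
    exact RCLike.norm_of_nonneg' this
  have htrace : (mcs t).trace = ∑ a, t a a := by
    simp [trace, Fintype.sum_prod_type, mcs_apply]
  have hsum : ((∑ a, ‖t a a‖ : ℝ) : ℂ) = 1 := by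
    rw [Complex.ofReal_sum, Finset.sum_congr rfl fun a _ => hdiag a, ← htrace, htr]
  exact_mod_cast hsum

end MaximallyCorrelated

/-- the negativity of a maximally correlated state is half the entrywise
l1-distance from its diagonal part in the computational product basis. -/
theorem stmt_4 {n : ℕ} (t : Fin n → Fin n → ℂ)
    (hpos : (mcs t).PosSemidef) (htr : (mcs t).trace = 1) :
    negativity (mcs t) = (1/2) * l1Norm (mcs t - mcsDiag t) := by
  rw [negativity, traceNorm_ptranspose_mcs, l1Norm_mcs_sub_mcsDiag,
    sum_norm_diag_eq_one_of_posSemidef hpos htr]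
  ring
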